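/- arXiv:2309.03106 — 2 statements merged into one kernel-verified Lean document; each statement's English description precedes it below -/
import Mathlib

section
/- Suppose the 2×2 matrix function μ(x, k) solves μ_x + ik²[σ₃, μ] = (kQ + q₁)μ with Q = [[0, q], [-q̄, 0]] and q₁ = c·i|q|²σ₃ for real c. Then ν(x,k) := -σ · conj(μ(x, k̄)) · σ, where σ = [[0,1],[-1,0]], solves the same equation at parameter k. -/
/-! The map `M ↦ -σ M̄ σ` is a ring endomorphism of the 2×2 complex matrices because `σ² = -1`,
and it is semilinear for complex conjugation. It fixes `Q` and negates `σ₃`. Applied to the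
equation at `k̄`, it turns `ik̄²` into `-ik²` and the purely imaginary `c i|q|²` into its negative,
and both signs cancel against the sign of `σ₃`. -/

open Matrix

def σ₃ : Matrix (Fin 2) (Fin 2) ℂ := !![1, 0; 0, -1]

def σmat : Matrix (Fin 2) (Fin 2) ℂ := !![0, 1; -1, 0]

def Qmat (q : ℝ → ℂ) (x : ℝ) : Matrix (Fin 2) (Fin 2) ℂ :=
  !![0, q x; -(starRingEnd ℂ) (q x), 0]

section TwistedConj

variable {n R : Type*} [Fintype n] [DecidableEq n] [CommRing R] [StarRing R]

def twistedConj (S : Matrix n n R) (hS : S * S = -1) : Matrix n n R →+* Matrix n n R where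
  toFun M := -(S * M.map (starRingEnd R) * S)
  map_one' := by simp [hS]
  map_mul' A B := by
    simp only [Matrix.map_mul, neg_mul_neg]
    rw [show S * A.map (starRingEnd R) * S * (S * B.map (starRingEnd R) * S)
      = S * A.map (starRingEnd R) * (S * S) * B.map (starRingEnd R) * S by noncomm_ring, hS]
    noncomm_ring
  map_zero' := by simp
  map_add' A B := by
    simp only [Matrix.map_add _ (map_add _), Matrix.mul_add, Matrix.add_mul, neg_add]

variable (S : Matrix n n R) (hS : S * S = -1)

theorem twistedConj_apply (M : Matrix n n R) :
    twistedConj S hS M = -(S * M.map (starRingEnd R) * S) := rfl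

theorem twistedConj_smul (z : R) (M : Matrix n n R) :
    twistedConj S hS (z • M) = star z • twistedConj S hS M := by
  simp only [twistedConj_apply, Matrix.map_smul' _ _ _ (map_mul _), Matrix.smul_mul,
    Matrix.mul_smul, smul_neg]
  rfl

end TwistedConj

theorem σmat_mul_σmat : σmat * σmat = -1 := by
  ext i j; fin_cases i <;> fin_cases j <;> simp [σmat]

theorem twistedConj_σ₃ : twistedConj σmat σmat_mul_σmat σ₃ = -σ₃ := by
  ext i j
  fin_cases i <;> fin_cases j <;>
    simp [twistedConj_apply, σmat, σ₃, vecMul, dotProduct, mul_apply, Fin.sum_univ_two]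

theorem twistedConj_Qmat (q : ℝ → ℂ) (x : ℝ) :
    twistedConj σmat σmat_mul_σmat (Qmat q x) = Qmat q x := by
  ext i j
  fin_cases i <;> fin_cases j <;>
    simp [twistedConj_apply, σmat, Qmat, vecMul, dotProduct, mul_apply, Fin.sum_univ_two]

theorem hasDerivAt_twistedConj_apply {n : Type*} [Fintype n] [DecidableEq n]
    (S : Matrix n n ℂ) (hS : S * S = -1) {f : ℝ → Matrix n n ℂ} {f' : Matrix n n ℂ} {x : ℝ}
    (hf : ∀ i j, HasDerivAt (fun y => f y i j) (f' i j) x) (i j : n) :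
    HasDerivAt (fun y => twistedConj S hS (f y) i j) (twistedConj S hS f' i j) x := by
  simp only [twistedConj_apply]
  refine HasDerivAt.neg (HasDerivAt.fun_sum fun k _ => ?_)
  refine HasDerivAt.mul_const (HasDerivAt.fun_sum fun l _ => ?_) _
  exact (hf l k).star.const_mul _

/-- If the family μ(·,k) solves μ_x + ik²[σ₃,μ] = (kQ + c·i|q|²σ₃)μ for every spectral
parameter, then ν(x,k) := -σ · conj(μ(x,k̄)) · σ solves the same equation at parameter k. -/
theorem stmt5 (q : ℝ → ℂ) (c : ℝ) (k : ℂ)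
    (μ μ' : ℂ → ℝ → Matrix (Fin 2) (Fin 2) ℂ)
    (hderiv : ∀ (K : ℂ) (x : ℝ) (i j : Fin 2),
      HasDerivAt (fun y => μ K y i j) (μ' K x i j) x)
    (hode : ∀ (K : ℂ) (x : ℝ),
      μ' K x + (Complex.I * K ^ 2) • (σ₃ * μ K x - μ K x * σ₃)
        = ((K • Qmat q x + ((c : ℂ) * Complex.I * ((‖q x‖) ^ 2 : ℝ)) • σ₃)
            * μ K x)) :
    (∀ (x : ℝ) (i j : Fin 2),
      HasDerivAt
        (fun y => (-(σmat * (μ ((starRingEnd ℂ) k) y).map (starRingEnd ℂ) * σmat)) i j)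
        ((-(σmat * (μ' ((starRingEnd ℂ) k) x).map (starRingEnd ℂ) * σmat)) i j) x) ∧
    (∀ x : ℝ,
      (-(σmat * (μ' ((starRingEnd ℂ) k) x).map (starRingEnd ℂ) * σmat))
        + (Complex.I * k ^ 2) •
            (σ₃ * (-(σmat * (μ ((starRingEnd ℂ) k) x).map (starRingEnd ℂ) * σmat))
              - (-(σmat * (μ ((starRingEnd ℂ) k) x).map (starRingEnd ℂ) * σmat)) * σ₃)
        = ((k • Qmat q x + ((c : ℂ) * Complex.I * ((‖q x‖) ^ 2 : ℝ)) • σ₃)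
            * (-(σmat * (μ ((starRingEnd ℂ) k) x).map (starRingEnd ℂ) * σmat)))) := by
  simp only [← twistedConj_apply σmat σmat_mul_σmat]
  refine ⟨fun x => hasDerivAt_twistedConj_apply _ _ (hderiv _ x), fun x => ?_⟩
  have h := congrArg (twistedConj σmat σmat_mul_σmat) (hode (starRingEnd ℂ k) x)
  have hk : star (Complex.I * starRingEnd ℂ k ^ 2) = -(Complex.I * k ^ 2) := by simp
  have hc : star ((c : ℂ) * Complex.I * ((‖q x‖ ^ 2 : ℝ) : ℂ))
      = -((c : ℂ) * Complex.I * ((‖q x‖ ^ 2 : ℝ) : ℂ)) := by simp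
  simp only [map_add, map_sub, map_mul, twistedConj_smul, twistedConj_σ₃, twistedConj_Qmat,
    hk, hc, Complex.star_def, Complex.conj_conj] at h
  simpa only [mul_neg, neg_mul, neg_sub_neg, neg_smul, ← smul_neg, neg_sub, neg_neg] using h
end

section
/- Let t > 0, x real with -4√t ≤ x ≤ 4√t, and θ(k) = k²x + 2k⁴t. For k = 10b + bi with b ∈ ℝ, one has Re(iθ(k)) = -7920 t b⁴ - 20 x b². Moreover, for all b ∈ ℝ, Re(iθ(k)) ≤ 5x²/(396t) ≤ 20/99, hence |e^{2iθ(k)}| ≤ e^{40/99} on the ray {10b + bi : b ≥ 0}. -/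
open Complex

def phase (x t : ℝ) (k : ℂ) : ℂ := k ^ 2 * x + 2 * k ^ 4 * t

theorem re_I_mul_phase_ray (x t b : ℝ) :
    (I * phase x t ((10 * b : ℝ) + (b : ℝ) * I)).re = -7920 * t * b ^ 4 - 20 * x * b ^ 2 := by
  simp only [phase, pow_succ, pow_zero, one_mul, mul_re, mul_im, add_re, add_im, ofReal_re,
    ofReal_im, I_re, I_im, re_ofNat, im_ofNat]
  ring

theorem neg_mul_sq_sub_mul_le (a c s : ℝ) (ha : 0 < a) : -a * s ^ 2 - c * s ≤ c ^ 2 / (4 * a) := by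
  rw [le_div_iff₀ (by positivity)]
  nlinarith [sq_nonneg (2 * a * s + c)]

theorem sq_le_sq_mul_of_neg_le_of_le_mul_sqrt {x t c : ℝ} (ht : 0 ≤ t) (hx : -(c * √t) ≤ x)
    (hx' : x ≤ c * √t) : x ^ 2 ≤ c ^ 2 * t := by
  calc x ^ 2 ≤ (c * √t) ^ 2 := sq_le_sq' hx hx'
    _ = c ^ 2 * t := by rw [mul_pow, Real.sq_sqrt ht]

/-- On the ray k = 10b + bi: Re(iθ(k)) = -7920tb⁴ - 20xb², this is bounded above by
5x²/(396t) ≤ 20/99 for |x| ≤ 4√t, hence |e^{2iθ(k)}| ≤ e^{40/99} on the ray b ≥ 0. -/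
theorem stmt11 (x t : ℝ) (ht : 0 < t)
    (hx : -4 * Real.sqrt t ≤ x) (hx' : x ≤ 4 * Real.sqrt t) :
    (∀ b : ℝ,
      (Complex.I * (((10 * b : ℝ) + (b : ℝ) * Complex.I) ^ 2 * (x : ℂ)
          + 2 * ((10 * b : ℝ) + (b : ℝ) * Complex.I) ^ 4 * (t : ℂ))).re
        = -7920 * t * b ^ 4 - 20 * x * b ^ 2) ∧
    (∀ b : ℝ, -7920 * t * b ^ 4 - 20 * x * b ^ 2 ≤ 5 * x ^ 2 / (396 * t)) ∧
    (5 * x ^ 2 / (396 * t) ≤ 20 / 99) ∧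
    (∀ b : ℝ, 0 ≤ b →
      ‖Complex.exp (2 * Complex.I *
          (((10 * b : ℝ) + (b : ℝ) * Complex.I) ^ 2 * (x : ℂ)
            + 2 * ((10 * b : ℝ) + (b : ℝ) * Complex.I) ^ 4 * (t : ℂ)))‖
        ≤ Real.exp (40 / 99)) := by
  have hre := re_I_mul_phase_ray x t
  have hbound (b : ℝ) : -7920 * t * b ^ 4 - 20 * x * b ^ 2 ≤ 5 * x ^ 2 / (396 * t) := by
    have h := neg_mul_sq_sub_mul_le (7920 * t) (20 * x) (b ^ 2) (by positivity)
    convert h using 1 <;> ring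
  have hx2 : x ^ 2 ≤ 4 ^ 2 * t := sq_le_sq_mul_of_neg_le_of_le_mul_sqrt ht.le (by linarith) hx'
  have hmax : 5 * x ^ 2 / (396 * t) ≤ 20 / 99 := by
    rw [div_le_iff₀ (by positivity)]
    linarith
  refine ⟨hre, hbound, hmax, fun b _ => ?_⟩
  rw [norm_exp, Real.exp_le_exp, mul_assoc, mul_re, re_ofNat, im_ofNat, zero_mul, sub_zero]
  change 2 * (I * phase x t _).re ≤ _
  linarith [hre b, hbound b]
end
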